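/- For every even natural number n = 2k there exists a divisor class C on the rational elliptic surface S (namely C = kL - (k-1)E_1) such that C is an l-section of arithmetic genus p with 2p + l - 1 = n. -/

import Mathlib

/-- The intersection form of the lattice `ℤ^10` with basis `L, E_1, ..., E_9`:
`L^2 = 1`, `E_i^2 = -1`, all mixed products `0`. -/
def inter (x y : Fin 10 → ℤ) : ℤ :=
  x 0 * y 0 - ∑ i : Fin 9, x i.succ * y i.succ

/-- The fiber class `F = 3L - E_1 - ... - E_9`. -/
def F : Fin 10 → ℤ := ![3, -1, -1, -1, -1, -1, -1, -1, -1, -1]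

/-- The canonical class `K = -F = -3L + E_1 + ... + E_9`. -/
def K : Fin 10 → ℤ := ![-3, 1, 1, 1, 1, 1, 1, 1, 1, 1]

/-! The class `C = kL - (k-1)E_1` has `C² = 2k - 1` and `C·F = 2k + 1`, so `C·(C + K) = -2`:
it is a `(2k+1)`-section of arithmetic genus `0`, and `2·0 + (2k+1) - 1 = 2k`. -/

theorem inter_add_K (C : Fin 10 → ℤ) : inter C (C + K) = inter C C - inter C F := by
  simp [inter, K, F, Fin.sum_univ_succ]
  ring

def lineMinusExc (a b : ℤ) : Fin 10 → ℤ := ![a, -b, 0, 0, 0, 0, 0, 0, 0, 0]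

theorem inter_lineMinusExc_self (a b : ℤ) :
    inter (lineMinusExc a b) (lineMinusExc a b) = a ^ 2 - b ^ 2 := by
  simp [inter, lineMinusExc, Fin.sum_univ_succ]
  ring

theorem inter_lineMinusExc_F (a b : ℤ) : inter (lineMinusExc a b) F = 3 * a - b := by
  simp [inter, lineMinusExc, F, Fin.sum_univ_succ]
  ring

theorem inter_lineMinusExc_pred_add_K (k : ℤ) :
    inter (lineMinusExc k (k - 1)) (lineMinusExc k (k - 1) + K) = -2 := by
  rw [inter_add_K, inter_lineMinusExc_self, inter_lineMinusExc_F]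
  ring

/-- For every even natural number `n` there exists a divisor class `C` on the
rational elliptic surface (namely `C = kL - (k-1)E_1` for `n = 2k`) which is an
`l`-section (`C · F = l`) of arithmetic genus `p = (1/2) C·(C + K) + 1` with
`2p + l - 1 = n`. -/
theorem even_genus_realized (n : ℕ) (hn : Even n) :
    ∃ C : Fin 10 → ℤ, ∃ l p : ℤ,
      inter C F = l ∧ inter C (C + K) / 2 + 1 = p ∧ 2*p + l - 1 = n := by
  obtain ⟨k, rfl⟩ := hn
  refine ⟨lineMinusExc k (k - 1), 2 * k + 1, 0, ?_, ?_, ?_⟩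
  · rw [inter_lineMinusExc_F]
    ring
  · rw [inter_lineMinusExc_pred_add_K]
    norm_num
  · push_cast
    ring
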